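/- arXiv:math/0605087 — 2 statements merged into one kernel-verified Lean document; each statement's English description precedes it below -/
import Mathlib

section
/- In the formal power series ring ℤ[[T₁,T₂]], let S be the power series S = Σ T₁^{(2a+b)/3} T₂^{(a+2b)/3}, the sum taken over all pairs (a,b) of nonnegative integers with a ≡ b (mod 3) (for such pairs both exponents are nonnegative integers; equivalently S = Σ_{c,k ≥ 0} T₁^{c+2k} T₂^{c+k} + Σ_{c ≥ 0, k ≥ 1} T₁^{c+k} T₂^{c+2k}). Then S · (1 − T₁²T₂)(1 − T₁T₂²)(1 − T₁T₂) = 1 − T₁³T₂³. Equivalently, the trivial-character part of (1 − u t^{(2,1,1)})^{-1}(1 − u^{-1} t^{(1,1,2)})^{-1} after the substitution t₁ = T₁^{1/3}, t₂ = 1, t₃ = T₂^{1/3} equals (1 − T^{(3,3)}) / ((1 − T^{(2,1)})(1 − T^{(1,2)})(1 − T^{(1,1)})), which is the Poincaré series P_{A₂}(T₁,T₂) of the divisorial filtration of the A₂ surface singularity. -/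
open MvPowerSeries

/-- The series `S = Σ T₁^{(2a+b)/3} T₂^{(a+2b)/3} ∈ ℤ[[T₁,T₂]]`, the sum over all pairs
`(a,b)` of nonnegative integers with `a ≡ b (mod 3)`. Since distinct pairs `(a,b)` give
distinct exponent vectors, `S` is the power series whose coefficient at `T₁^{d₁}T₂^{d₂}`
is `1` if `(d₁,d₂) = ((2a+b)/3, (a+2b)/3)` for some such pair and `0` otherwise. -/
noncomputable def SA2 : MvPowerSeries (Fin 2) ℤ := fun d =>
  letI := Classical.propDecidable
  if ∃ a b : ℕ, a % 3 = b % 3 ∧ 2 * a + b = 3 * d 0 ∧ a + 2 * b = 3 * d 1 then 1 else 0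

section Helpers
open Finsupp

lemma hXX (a b : ℕ) : (X 0 : MvPowerSeries (Fin 2) ℤ) ^ a * X 1 ^ b =
    monomial (single 0 a + single 1 b) 1 := by
  rw [X_pow_eq, X_pow_eq, monomial_mul_monomial, one_mul]

lemma hle (a b : ℕ) (d : Fin 2 →₀ ℕ) :
    (single 0 a + single 1 b : Fin 2 →₀ ℕ) ≤ d ↔ a ≤ d 0 ∧ b ≤ d 1 := by
  rw [Finsupp.le_def]
  constructor
  · intro h; exact ⟨by simpa using h 0, by simpa using h 1⟩
  · rintro ⟨h1, h2⟩ i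
    fin_cases i <;> simp [Finsupp.single_apply, *]

lemma hmul (f : MvPowerSeries (Fin 2) ℤ) (a b : ℕ) (d : Fin 2 →₀ ℕ) :
    coeff d (f * (1 - X 0 ^ a * X 1 ^ b)) =
      coeff d f - if a ≤ d 0 ∧ b ≤ d 1 then
        coeff (d - (single 0 a + single 1 b)) f else 0 := by
  rw [mul_sub, mul_one, map_sub, hXX, coeff_mul_monomial]
  simp only [hle, mul_one]

lemma hsub (a b : ℕ) (d : Fin 2 →₀ ℕ) :
    (d - (single 0 a + single 1 b) : Fin 2 →₀ ℕ) 0 = d 0 - a ∧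
    (d - (single 0 a + single 1 b) : Fin 2 →₀ ℕ) 1 = d 1 - b := by
  constructor <;> simp [tsub_apply, Finsupp.single_apply]

lemma heq (a b : ℕ) (d : Fin 2 →₀ ℕ) :
    d = (single 0 a + single 1 b : Fin 2 →₀ ℕ) ↔ d 0 = a ∧ d 1 = b := by
  rw [Finsupp.ext_iff, Fin.forall_fin_two]
  simp [Finsupp.single_apply]

lemma coeff_SA2 (d : Fin 2 →₀ ℕ) :
    coeff d SA2 = if d 0 ≤ 2 * d 1 ∧ d 1 ≤ 2 * d 0 then 1 else 0 := by
  have h : (∃ a b : ℕ, a % 3 = b % 3 ∧ 2 * a + b = 3 * d 0 ∧ a + 2 * b = 3 * d 1) ↔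
      (d 0 ≤ 2 * d 1 ∧ d 1 ≤ 2 * d 0) := by
    constructor
    · rintro ⟨a, b, h1, h2, h3⟩; omega
    · rintro ⟨h1, h2⟩
      exact ⟨2 * d 0 - d 1, 2 * d 1 - d 0, by omega, by omega, by omega⟩
  classical
  rw [coeff_apply]
  unfold SA2
  rw [if_congr h rfl rfl]

def Aaux : MvPowerSeries (Fin 2) ℤ := fun d => if d 0 = 2 * d 1 then 1 else 0
def Baux : MvPowerSeries (Fin 2) ℤ := fun d => if d 1 = 2 * d 0 ∧ d 0 ≠ 0 then 1 else 0

lemma coeff_Aaux (d : Fin 2 →₀ ℕ) :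
    coeff d Aaux = if d 0 = 2 * d 1 then 1 else 0 := rfl
lemma coeff_Baux (d : Fin 2 →₀ ℕ) :
    coeff d Baux = if d 1 = 2 * d 0 ∧ d 0 ≠ 0 then 1 else 0 := rfl

lemma hzero (d : Fin 2 →₀ ℕ) : d = 0 ↔ d 0 = 0 ∧ d 1 = 0 := by
  rw [Finsupp.ext_iff, Fin.forall_fin_two]; simp

lemma step1 : SA2 * (1 - (X 0 : MvPowerSeries (Fin 2) ℤ) ^ 1 * X 1 ^ 1) = Aaux + Baux := by
  ext d
  rw [hmul, map_add, coeff_SA2, coeff_SA2, coeff_Aaux, coeff_Baux,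
    (hsub 1 1 d).1, (hsub 1 1 d).2]
  split_ifs <;> omega

lemma step2 : Aaux * (1 - (X 0 : MvPowerSeries (Fin 2) ℤ) ^ 2 * X 1 ^ 1) = 1 := by
  ext d
  rw [hmul, coeff_Aaux, coeff_Aaux, coeff_one, (hsub 2 1 d).1, (hsub 2 1 d).2]
  simp only [hzero]
  split_ifs <;> omega

lemma step3 : Baux * (1 - (X 0 : MvPowerSeries (Fin 2) ℤ) ^ 1 * X 1 ^ 2) =
    (X 0 : MvPowerSeries (Fin 2) ℤ) ^ 1 * X 1 ^ 2 := by
  ext d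
  rw [hmul, coeff_Baux, coeff_Baux, (hsub 1 2 d).1, (hsub 1 2 d).2, hXX,
    coeff_monomial]
  simp only [heq]
  split_ifs <;> omega

end Helpers

/-- In `ℤ[[T₁,T₂]]` one has
`S · (1 − T₁²T₂)(1 − T₁T₂²)(1 − T₁T₂) = 1 − T₁³T₂³`, i.e. the trivial-character part `S`
of the equivariant Poincaré series equals the Poincaré series
`P_{A₂}(T₁,T₂) = (1 − T^{(3,3)}) / ((1 − T^{(2,1)})(1 − T^{(1,2)})(1 − T^{(1,1)}))`
of the divisorial filtration of the `A₂` surface singularity. -/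
theorem poincare_series_A2 :
    SA2 * (1 - (X 0 : MvPowerSeries (Fin 2) ℤ) ^ 2 * X 1)
        * (1 - (X 0 : MvPowerSeries (Fin 2) ℤ) * X 1 ^ 2)
        * (1 - (X 0 : MvPowerSeries (Fin 2) ℤ) * X 1) =
      1 - (X 0 : MvPowerSeries (Fin 2) ℤ) ^ 3 * X 1 ^ 3 := by
  have main : SA2 * (1 - (X 0 : MvPowerSeries (Fin 2) ℤ) ^ 2 * X 1 ^ 1)
        * (1 - (X 0 : MvPowerSeries (Fin 2) ℤ) ^ 1 * X 1 ^ 2)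
        * (1 - (X 0 : MvPowerSeries (Fin 2) ℤ) ^ 1 * X 1 ^ 1) =
      1 - (X 0 : MvPowerSeries (Fin 2) ℤ) ^ 3 * X 1 ^ 3 := by
    linear_combination (1 - (X 0 : MvPowerSeries (Fin 2) ℤ) ^ 2 * X 1 ^ 1) *
        (1 - (X 0 : MvPowerSeries (Fin 2) ℤ) ^ 1 * X 1 ^ 2) * step1 +
      (1 - (X 0 : MvPowerSeries (Fin 2) ℤ) ^ 1 * X 1 ^ 2) * step2 +
      (1 - (X 0 : MvPowerSeries (Fin 2) ℤ) ^ 2 * X 1 ^ 1) * step3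
  simpa only [pow_one] using main
end

section
/- In the formal power series ring ℤ[[T₁,T₂,T₃,T₄]], let S be the power series S = Σ T₁^{(4a+b)/5} T₂^{(3a+2b)/5} T₃^{(2a+3b)/5} T₄^{(a+4b)/5}, the sum taken over all pairs (a,b) of nonnegative integers with a ≡ b (mod 5) (for such pairs all four exponents are nonnegative integers; equivalently S = Σ_{c,k ≥ 0} T^{(c+4k, c+3k, c+2k, c+k)} + Σ_{c ≥ 0, k ≥ 1} T^{(c+k, c+2k, c+3k, c+4k)}). Then S · (1 − T^{(1,1,1,1)})(1 − T^{(1,2,3,4)})(1 − T^{(4,3,2,1)}) = 1 − T^{(5,5,5,5)}. Equivalently, the Poincaré series of the divisorial filtration of the A₄ surface singularity equals P_{A₄}(T₁,T₂,T₃,T₄) = (1 − T^{(5,5,5,5)}) / ((1 − T^{(1,1,1,1)})(1 − T^{(1,2,3,4)})(1 − T^{(4,3,2,1)})). -/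
open MvPowerSeries

/-- The series `S = Σ T₁^{(4a+b)/5} T₂^{(3a+2b)/5} T₃^{(2a+3b)/5} T₄^{(a+4b)/5}` in
`ℤ[[T₁,T₂,T₃,T₄]]`, the sum over all pairs `(a,b)` of nonnegative integers with
`a ≡ b (mod 5)`. Since distinct pairs `(a,b)` give distinct exponent vectors, `S` is the
power series whose coefficient at `T^d` is `1` if `d` arises from such a pair and `0`
otherwise. -/
noncomputable def SA4 : MvPowerSeries (Fin 4) ℤ := fun d =>
  letI := Classical.propDecidable
  if ∃ a b : ℕ, a % 5 = b % 5 ∧ 4 * a + b = 5 * d 0 ∧ 3 * a + 2 * b = 5 * d 1 ∧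
      2 * a + 3 * b = 5 * d 2 ∧ a + 4 * b = 5 * d 3 then 1 else 0


open Finsupp


-- exponent vectors
noncomputable def vE : Fin 4 →₀ ℕ := single 0 1 + single 1 1 + single 2 1 + single 3 1
noncomputable def vP : Fin 4 →₀ ℕ := single 0 1 + single 1 2 + single 2 3 + single 3 4
noncomputable def vQ : Fin 4 →₀ ℕ := single 0 4 + single 1 3 + single 2 2 + single 3 1
noncomputable def vF : Fin 4 →₀ ℕ := single 0 5 + single 1 5 + single 2 5 + single 3 5

@[simp] lemma vE0 : vE 0 = 1 := by simp [vE]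
@[simp] lemma vE1 : vE 1 = 1 := by simp [vE]
@[simp] lemma vE2 : vE 2 = 1 := by simp [vE]
@[simp] lemma vE3 : vE 3 = 1 := by simp [vE]

lemma forall4 {P : Fin 4 → Prop} : (∀ i, P i) ↔ P 0 ∧ P 1 ∧ P 2 ∧ P 3 := by
  constructor
  · exact fun h => ⟨h 0, h 1, h 2, h 3⟩
  · rintro ⟨p0, p1, p2, p3⟩ i
    fin_cases i <;> assumption

lemma le4 (v d : Fin 4 →₀ ℕ) :
    v ≤ d ↔ v 0 ≤ d 0 ∧ v 1 ≤ d 1 ∧ v 2 ≤ d 2 ∧ v 3 ≤ d 3 := by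
  rw [Finsupp.le_def, forall4]

lemma tsub4 (d v : Fin 4 →₀ ℕ) (i : Fin 4) : (d - v) i = d i - v i :=
  Finsupp.tsub_apply d v i

lemma eq4 (d v : Fin 4 →₀ ℕ) :
    d = v ↔ d 0 = v 0 ∧ d 1 = v 1 ∧ d 2 = v 2 ∧ d 3 = v 3 := by
  constructor
  · rintro rfl; exact ⟨rfl, rfl, rfl, rfl⟩
  · rintro ⟨h0, h1, h2, h3⟩
    ext i; fin_cases i <;> assumption

def CA (w x y z : ℕ) : Prop := ∃ c k : ℕ, w = c + 4*k ∧ x = c + 3*k ∧ y = c + 2*k ∧ z = c + k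
def CB (w x y z : ℕ) : Prop :=
  ∃ c k : ℕ, 1 ≤ k ∧ w = c + k ∧ x = c + 2*k ∧ y = c + 3*k ∧ z = c + 4*k
def CQ (w x y z : ℕ) : Prop := ∃ k : ℕ, w = 4*k ∧ x = 3*k ∧ y = 2*k ∧ z = k
def CP (w x y z : ℕ) : Prop := ∃ k : ℕ, 1 ≤ k ∧ w = k ∧ x = 2*k ∧ y = 3*k ∧ z = 4*k

lemma keyS (w x y z : ℕ) :
    (∃ a b : ℕ, a % 5 = b % 5 ∧ 4 * a + b = 5 * w ∧ 3 * a + 2 * b = 5 * x ∧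
      2 * a + 3 * b = 5 * y ∧ a + 4 * b = 5 * z) ↔ (CA w x y z ∨ CB w x y z) := by
  constructor
  · rintro ⟨a, b, hm, h0, h1, h2, h3⟩
    rcases le_or_gt b a with h | h
    · exact Or.inl ⟨b, (a - b) / 5, by omega, by omega, by omega, by omega⟩
    · exact Or.inr ⟨a, (b - a) / 5, by omega, by omega, by omega, by omega, by omega⟩
  · rintro (⟨c, k, e0, e1, e2, e3⟩ | ⟨c, k, hk, e0, e1, e2, e3⟩)
    · exact ⟨c + 5*k, c, by omega, by omega, by omega, by omega, by omega⟩
    · exact ⟨c, c + 5*k, by omega, by omega, by omega, by omega, by omega⟩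

lemma disjS (w x y z : ℕ) : ¬(CA w x y z ∧ CB w x y z) := by
  rintro ⟨⟨c, k, e0, e1, e2, e3⟩, ⟨c', k', hk', f0, f1, f2, f3⟩⟩
  omega

lemma keyA (w x y z : ℕ) (h0 : 1 ≤ w) (h1 : 1 ≤ x) (h2 : 1 ≤ y) (h3 : 1 ≤ z) :
    (CA w x y z ↔ (CA (w-1) (x-1) (y-1) (z-1) ∨ CQ w x y z)) ∧
      ¬(CA (w-1) (x-1) (y-1) (z-1) ∧ CQ w x y z) := by
  constructor
  · constructor
    · rintro ⟨c, k, e0, e1, e2, e3⟩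
      rcases Nat.eq_zero_or_pos c with rfl | hc
      · exact Or.inr ⟨k, by omega, by omega, by omega, by omega⟩
      · exact Or.inl ⟨c - 1, k, by omega, by omega, by omega, by omega⟩
    · rintro (⟨c, k, e0, e1, e2, e3⟩ | ⟨k, e0, e1, e2, e3⟩)
      · exact ⟨c + 1, k, by omega, by omega, by omega, by omega⟩
      · exact ⟨0, k, by omega, by omega, by omega, by omega⟩
  · rintro ⟨⟨c, k, e0, e1, e2, e3⟩, ⟨k', f0, f1, f2, f3⟩⟩
    omega

lemma keyA0 (w x y z : ℕ) (h : w = 0 ∨ x = 0 ∨ y = 0 ∨ z = 0) :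
    CA w x y z ↔ CQ w x y z := by
  constructor
  · rintro ⟨c, k, e0, e1, e2, e3⟩
    exact ⟨0, by omega, by omega, by omega, by omega⟩
  · rintro ⟨k, e0, e1, e2, e3⟩
    exact ⟨0, 0, by omega, by omega, by omega, by omega⟩

lemma keyB (w x y z : ℕ) (h0 : 1 ≤ w) (h1 : 1 ≤ x) (h2 : 1 ≤ y) (h3 : 1 ≤ z) :
    (CB w x y z ↔ (CB (w-1) (x-1) (y-1) (z-1) ∨ CP w x y z)) ∧
      ¬(CB (w-1) (x-1) (y-1) (z-1) ∧ CP w x y z) := by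
  constructor
  · constructor
    · rintro ⟨c, k, hk, e0, e1, e2, e3⟩
      rcases Nat.eq_zero_or_pos c with rfl | hc
      · exact Or.inr ⟨k, hk, by omega, by omega, by omega, by omega⟩
      · exact Or.inl ⟨c - 1, k, hk, by omega, by omega, by omega, by omega⟩
    · rintro (⟨c, k, hk, e0, e1, e2, e3⟩ | ⟨k, hk, e0, e1, e2, e3⟩)
      · exact ⟨c + 1, k, hk, by omega, by omega, by omega, by omega⟩
      · exact ⟨0, k, hk, by omega, by omega, by omega, by omega⟩
  · rintro ⟨⟨c, k, hk, e0, e1, e2, e3⟩, ⟨k', hk', f0, f1, f2, f3⟩⟩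
    omega

lemma keyB0 (w x y z : ℕ) (h : w = 0 ∨ x = 0 ∨ y = 0 ∨ z = 0) :
    CB w x y z ↔ CP w x y z := by
  constructor
  · rintro ⟨c, k, hk, e0, e1, e2, e3⟩; omega
  · rintro ⟨k, hk, e0, e1, e2, e3⟩; omega

lemma keyQ (w x y z : ℕ) (h0 : 4 ≤ w) (h1 : 3 ≤ x) (h2 : 2 ≤ y) (h3 : 1 ≤ z) :
    (CQ w x y z ↔ CQ (w-4) (x-3) (y-2) (z-1)) ∧ ¬(w = 0 ∧ x = 0 ∧ y = 0 ∧ z = 0) := by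
  constructor
  · constructor
    · rintro ⟨k, e0, e1, e2, e3⟩
      exact ⟨k - 1, by omega, by omega, by omega, by omega⟩
    · rintro ⟨k, e0, e1, e2, e3⟩
      exact ⟨k + 1, by omega, by omega, by omega, by omega⟩
  · omega

lemma keyQ0 (w x y z : ℕ) (h : w < 4 ∨ x < 3 ∨ y < 2 ∨ z < 1) :
    CQ w x y z ↔ (w = 0 ∧ x = 0 ∧ y = 0 ∧ z = 0) := by
  constructor
  · rintro ⟨k, e0, e1, e2, e3⟩; omega
  · rintro ⟨rfl, rfl, rfl, rfl⟩
    exact ⟨0, rfl, rfl, rfl, rfl⟩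

lemma keyP (w x y z : ℕ) (h0 : 1 ≤ w) (h1 : 2 ≤ x) (h2 : 3 ≤ y) (h3 : 4 ≤ z) :
    (CP w x y z ↔ (CP (w-1) (x-2) (y-3) (z-4) ∨ (w = 1 ∧ x = 2 ∧ y = 3 ∧ z = 4))) ∧
      ¬(CP (w-1) (x-2) (y-3) (z-4) ∧ (w = 1 ∧ x = 2 ∧ y = 3 ∧ z = 4)) := by
  constructor
  · constructor
    · rintro ⟨k, hk, e0, e1, e2, e3⟩
      rcases Nat.lt_or_ge k 2 with hk2 | hk2
      · exact Or.inr (by omega)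
      · exact Or.inl ⟨k - 1, by omega, by omega, by omega, by omega, by omega⟩
    · rintro (⟨k, hk, e0, e1, e2, e3⟩ | ⟨rfl, rfl, rfl, rfl⟩)
      · exact ⟨k + 1, by omega, by omega, by omega, by omega, by omega⟩
      · exact ⟨1, by omega, by omega, by omega, by omega, by omega⟩
  · rintro ⟨⟨k, hk, e0, e1, e2, e3⟩, h⟩
    omega

lemma keyP0 (w x y z : ℕ) (h : w < 1 ∨ x < 2 ∨ y < 3 ∨ z < 4) :
    ¬CP w x y z ∧ ¬(w = 1 ∧ x = 2 ∧ y = 3 ∧ z = 4) := by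
  constructor
  · rintro ⟨k, hk, e0, e1, e2, e3⟩; omega
  · omega

@[simp] lemma vP0 : vP 0 = 1 := by simp [vP]
@[simp] lemma vP1 : vP 1 = 2 := by simp [vP]
@[simp] lemma vP2 : vP 2 = 3 := by simp [vP]
@[simp] lemma vP3 : vP 3 = 4 := by simp [vP]
@[simp] lemma vQ0 : vQ 0 = 4 := by simp [vQ]
@[simp] lemma vQ1 : vQ 1 = 3 := by simp [vQ]
@[simp] lemma vQ2 : vQ 2 = 2 := by simp [vQ]
@[simp] lemma vQ3 : vQ 3 = 1 := by simp [vQ]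

noncomputable def Aser : MvPowerSeries (Fin 4) ℤ := fun d =>
  letI := Classical.propDecidable
  if CA (d 0) (d 1) (d 2) (d 3) then 1 else 0
noncomputable def Bser : MvPowerSeries (Fin 4) ℤ := fun d =>
  letI := Classical.propDecidable
  if CB (d 0) (d 1) (d 2) (d 3) then 1 else 0
noncomputable def Qser : MvPowerSeries (Fin 4) ℤ := fun d =>
  letI := Classical.propDecidable
  if CQ (d 0) (d 1) (d 2) (d 3) then 1 else 0
noncomputable def Pser : MvPowerSeries (Fin 4) ℤ := fun d =>
  letI := Classical.propDecidable
  if CP (d 0) (d 1) (d 2) (d 3) then 1 else 0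

lemma mul_one_sub_mono (f g : MvPowerSeries (Fin 4) ℤ) (v : Fin 4 →₀ ℕ)
    (h : ∀ d : Fin 4 →₀ ℕ,
      (coeff d f) - (if v ≤ d then coeff (d - v) f else 0) = coeff d g) :
    f * (1 - monomial v (1:ℤ)) = g := by
  ext d
  rw [mul_sub, mul_one, map_sub, coeff_mul_monomial]
  simpa using h d

lemma hAstep : Aser * (1 - monomial vE (1:ℤ)) = Qser := by
  classical
  apply mul_one_sub_mono
  intro d
  simp only [Aser, Qser, coeff_apply, tsub4, vE0, vE1, vE2, vE3]
  by_cases hle : vE ≤ d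
  · have hc : 1 ≤ d 0 ∧ 1 ≤ d 1 ∧ 1 ≤ d 2 ∧ 1 ≤ d 3 := by
      have := (le4 vE d).mp hle; simpa using this
    obtain ⟨hiff, hdisj⟩ := keyA (d 0) (d 1) (d 2) (d 3) hc.1 hc.2.1 hc.2.2.1 hc.2.2.2
    rw [if_pos hle]
    by_cases hP' : CA (d 0 - 1) (d 1 - 1) (d 2 - 1) (d 3 - 1)
    · have hG : ¬ CQ (d 0) (d 1) (d 2) (d 3) := fun hg => hdisj ⟨hP', hg⟩
      rw [if_pos (hiff.mpr (Or.inl hP')), if_pos hP', if_neg hG]; norm_num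
    · by_cases hG : CQ (d 0) (d 1) (d 2) (d 3)
      · rw [if_pos (hiff.mpr (Or.inr hG)), if_neg hP', if_pos hG]; norm_num
      · have hP : ¬ CA (d 0) (d 1) (d 2) (d 3) := fun hp => (hiff.mp hp).elim hP' hG
        rw [if_neg hP, if_neg hP', if_neg hG]; norm_num
  · have hz : d 0 = 0 ∨ d 1 = 0 ∨ d 2 = 0 ∨ d 3 = 0 := by
      rw [le4] at hle; simp only [vE0, vE1, vE2, vE3] at hle; omega
    rw [if_neg hle, keyA0 _ _ _ _ hz, sub_zero]

lemma hBstep : Bser * (1 - monomial vE (1:ℤ)) = Pser := by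
  classical
  apply mul_one_sub_mono
  intro d
  simp only [Bser, Pser, coeff_apply, tsub4, vE0, vE1, vE2, vE3]
  by_cases hle : vE ≤ d
  · have hc : 1 ≤ d 0 ∧ 1 ≤ d 1 ∧ 1 ≤ d 2 ∧ 1 ≤ d 3 := by
      have := (le4 vE d).mp hle; simpa using this
    obtain ⟨hiff, hdisj⟩ := keyB (d 0) (d 1) (d 2) (d 3) hc.1 hc.2.1 hc.2.2.1 hc.2.2.2
    rw [if_pos hle]
    by_cases hP' : CB (d 0 - 1) (d 1 - 1) (d 2 - 1) (d 3 - 1)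
    · have hG : ¬ CP (d 0) (d 1) (d 2) (d 3) := fun hg => hdisj ⟨hP', hg⟩
      rw [if_pos (hiff.mpr (Or.inl hP')), if_pos hP', if_neg hG]; norm_num
    · by_cases hG : CP (d 0) (d 1) (d 2) (d 3)
      · rw [if_pos (hiff.mpr (Or.inr hG)), if_neg hP', if_pos hG]; norm_num
      · have hP : ¬ CB (d 0) (d 1) (d 2) (d 3) := fun hp => (hiff.mp hp).elim hP' hG
        rw [if_neg hP, if_neg hP', if_neg hG]; norm_num
  · have hz : d 0 = 0 ∨ d 1 = 0 ∨ d 2 = 0 ∨ d 3 = 0 := by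
      rw [le4] at hle; simp only [vE0, vE1, vE2, vE3] at hle; omega
    rw [if_neg hle, keyB0 _ _ _ _ hz, sub_zero]

lemma hQstep : Qser * (1 - monomial vQ (1:ℤ)) = 1 := by
  classical
  apply mul_one_sub_mono
  intro d
  rw [coeff_one]
  have hd0 : (d = 0) ↔ (d 0 = 0 ∧ d 1 = 0 ∧ d 2 = 0 ∧ d 3 = 0) := by
    rw [eq4]; simp
  simp only [Qser, coeff_apply, tsub4, vQ0, vQ1, vQ2, vQ3]
  by_cases hle : vQ ≤ d
  · have hc : 4 ≤ d 0 ∧ 3 ≤ d 1 ∧ 2 ≤ d 2 ∧ 1 ≤ d 3 := by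
      have := (le4 vQ d).mp hle; simpa using this
    obtain ⟨hiff, hne⟩ := keyQ (d 0) (d 1) (d 2) (d 3) hc.1 hc.2.1 hc.2.2.1 hc.2.2.2
    rw [if_pos hle, if_neg (fun h => hne (hd0.mp h))]
    by_cases hG : CQ (d 0) (d 1) (d 2) (d 3)
    · rw [if_pos hG, if_pos (hiff.mp hG)]; norm_num
    · rw [if_neg hG, if_neg (fun h => hG (hiff.mpr h))]; norm_num
  · have hz : d 0 < 4 ∨ d 1 < 3 ∨ d 2 < 2 ∨ d 3 < 1 := by
      rw [le4] at hle; simp only [vQ0, vQ1, vQ2, vQ3] at hle; omega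
    rw [if_neg hle, sub_zero, keyQ0 _ _ _ _ hz]
    by_cases hd : d = 0
    · rw [if_pos (hd0.mp hd), if_pos hd]
    · rw [if_neg (fun h => hd (hd0.mpr h)), if_neg hd]

lemma hPstep : Pser * (1 - monomial vP (1:ℤ)) = monomial vP (1:ℤ) := by
  classical
  apply mul_one_sub_mono
  intro d
  rw [coeff_monomial]
  have hdP : (d = vP) ↔ (d 0 = 1 ∧ d 1 = 2 ∧ d 2 = 3 ∧ d 3 = 4) := by
    rw [eq4]; simp
  simp only [Pser, coeff_apply, tsub4, vP0, vP1, vP2, vP3]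
  by_cases hle : vP ≤ d
  · have hc : 1 ≤ d 0 ∧ 2 ≤ d 1 ∧ 3 ≤ d 2 ∧ 4 ≤ d 3 := by
      have := (le4 vP d).mp hle; simpa using this
    obtain ⟨hiff, hdisj⟩ := keyP (d 0) (d 1) (d 2) (d 3) hc.1 hc.2.1 hc.2.2.1 hc.2.2.2
    rw [if_pos hle]
    by_cases hP' : CP (d 0 - 1) (d 1 - 2) (d 2 - 3) (d 3 - 4)
    · have hG : ¬ (d = vP) := fun hg => hdisj ⟨hP', hdP.mp hg⟩
      rw [if_pos (hiff.mpr (Or.inl hP')), if_pos hP', if_neg hG]; norm_num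
    · by_cases hG : d = vP
      · rw [if_pos (hiff.mpr (Or.inr (hdP.mp hG))), if_neg hP', if_pos hG]; norm_num
      · have hP : ¬ CP (d 0) (d 1) (d 2) (d 3) :=
          fun hp => (hiff.mp hp).elim hP' (fun h => hG (hdP.mpr h))
        rw [if_neg hP, if_neg hP', if_neg hG]; norm_num
  · have hz : d 0 < 1 ∨ d 1 < 2 ∨ d 2 < 3 ∨ d 3 < 4 := by
      rw [le4] at hle; simp only [vP0, vP1, vP2, vP3] at hle; omega
    obtain ⟨hnP, hnE⟩ := keyP0 (d 0) (d 1) (d 2) (d 3) hz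
    rw [if_neg hle, sub_zero, if_neg hnP, if_neg (fun h => hnE (hdP.mp h))]

lemma hSAB : SA4 = Aser + Bser := by
  classical
  ext d
  rw [map_add]
  simp only [SA4, Aser, Bser, coeff_apply]
  by_cases hA' : CA (d 0) (d 1) (d 2) (d 3)
  · have hB' : ¬ CB (d 0) (d 1) (d 2) (d 3) := fun h => disjS _ _ _ _ ⟨hA', h⟩
    rw [if_pos ((keyS _ _ _ _).mpr (Or.inl hA')), if_pos hA', if_neg hB']; norm_num
  · by_cases hB' : CB (d 0) (d 1) (d 2) (d 3)
    · rw [if_pos ((keyS _ _ _ _).mpr (Or.inr hB')), if_neg hA', if_pos hB']; norm_num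
    · rw [if_neg (fun h => ((keyS _ _ _ _).mp h).elim hA' hB'), if_neg hA', if_neg hB']
      norm_num

lemma hXE : (X 0 : MvPowerSeries (Fin 4) ℤ) * X 1 * X 2 * X 3 = monomial vE (1:ℤ) := by
  rw [X_def, X_def, X_def, X_def, monomial_mul_monomial, monomial_mul_monomial,
    monomial_mul_monomial, one_mul, one_mul, one_mul]
  rfl

lemma hXP : (X 0 : MvPowerSeries (Fin 4) ℤ) * X 1 ^ 2 * X 2 ^ 3 * X 3 ^ 4
    = monomial vP (1:ℤ) := by
  rw [X_pow_eq, X_pow_eq, X_pow_eq, X_def, monomial_mul_monomial, monomial_mul_monomial,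
    monomial_mul_monomial, one_mul, one_mul, one_mul]
  rfl

lemma hXQ : (X 0 : MvPowerSeries (Fin 4) ℤ) ^ 4 * X 1 ^ 3 * X 2 ^ 2 * X 3
    = monomial vQ (1:ℤ) := by
  rw [X_pow_eq, X_pow_eq, X_pow_eq, X_def, monomial_mul_monomial, monomial_mul_monomial,
    monomial_mul_monomial, one_mul, one_mul, one_mul]
  rfl

lemma hXF : (X 0 : MvPowerSeries (Fin 4) ℤ) ^ 5 * X 1 ^ 5 * X 2 ^ 5 * X 3 ^ 5
    = monomial vF (1:ℤ) := by
  rw [X_pow_eq, X_pow_eq, X_pow_eq, X_pow_eq, monomial_mul_monomial, monomial_mul_monomial,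
    monomial_mul_monomial, one_mul, one_mul, one_mul]
  rfl

lemma hPQ : (monomial vP (1:ℤ)) * monomial vQ (1:ℤ) = monomial vF (1:ℤ) := by
  have h : vP + vQ = vF := by
    ext i
    fin_cases i <;> simp [vP, vQ, vF, Finsupp.single_apply]
  rw [monomial_mul_monomial, one_mul, h]

/-- In `ℤ[[T₁,T₂,T₃,T₄]]` one has
`S · (1 − T^{(1,1,1,1)})(1 − T^{(1,2,3,4)})(1 − T^{(4,3,2,1)}) = 1 − T^{(5,5,5,5)}`,
i.e. the Poincaré series of the divisorial filtration of the `A₄` surface singularity is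
`P_{A₄}(T) = (1 − T^{(5,5,5,5)}) / ((1 − T^{(1,1,1,1)})(1 − T^{(1,2,3,4)})(1 − T^{(4,3,2,1)}))`. -/
theorem poincare_series_A4 :
    SA4 * (1 - (X 0 : MvPowerSeries (Fin 4) ℤ) * X 1 * X 2 * X 3)
        * (1 - (X 0 : MvPowerSeries (Fin 4) ℤ) * X 1 ^ 2 * X 2 ^ 3 * X 3 ^ 4)
        * (1 - (X 0 : MvPowerSeries (Fin 4) ℤ) ^ 4 * X 1 ^ 3 * X 2 ^ 2 * X 3) =
      1 - (X 0 : MvPowerSeries (Fin 4) ℤ) ^ 5 * X 1 ^ 5 * X 2 ^ 5 * X 3 ^ 5 := by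
  rw [hXE, hXP, hXQ, hXF, hSAB]
  have e1 : (Aser + Bser) * (1 - monomial vE (1:ℤ)) * (1 - monomial vP (1:ℤ))
        * (1 - monomial vQ (1:ℤ))
      = Aser * (1 - monomial vE (1:ℤ)) * (1 - monomial vQ (1:ℤ)) * (1 - monomial vP (1:ℤ))
        + Bser * (1 - monomial vE (1:ℤ)) * (1 - monomial vP (1:ℤ)) * (1 - monomial vQ (1:ℤ)) := by
    ring
  rw [e1, hAstep, hBstep, hQstep, hPstep, one_mul, mul_sub, mul_one, hPQ]
  ring
end
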